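/- arXiv:2408.16318 — 5 statements merged into one kernel-verified Lean document; each statement's English description precedes it below -/
import Mathlib

section
/- If (A,B) is a quaternary Legendre pair of length ℓ, then PSD(A,s) + PSD(B,s) = 2ℓ + 2 for all s = 1, 2, ..., ℓ-1. -/
open Finset

/-- Periodic autocorrelation function of a sequence of length `ℓ`, indices mod `ℓ`. -/
noncomputable def PAF (ℓ : ℕ) (A : ℕ → ℂ) (s : ℕ) : ℂ :=
  ∑ j ∈ Finset.range ℓ, A j * (starRingEnd ℂ) (A ((j + s) % ℓ))

/-- Discrete Fourier transform of a sequence of length `ℓ`. -/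
noncomputable def DFT (ℓ : ℕ) (A : ℕ → ℂ) (s : ℕ) : ℂ :=
  ∑ j ∈ Finset.range ℓ, A j * Complex.exp (2 * Real.pi * Complex.I * j * s / ℓ)

/-- Power spectral density. -/
noncomputable def PSD (ℓ : ℕ) (A : ℕ → ℂ) (s : ℕ) : ℝ :=
  ‖DFT ℓ A s‖ ^ 2

/-- A sequence is quaternary if all its entries (up to length `ℓ`) are fourth roots of unity. -/
def IsQuaternary (ℓ : ℕ) (A : ℕ → ℂ) : Prop :=
  ∀ j < ℓ, A j = 1 ∨ A j = -1 ∨ A j = Complex.I ∨ A j = -Complex.I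

/-- `(A, B)` is a quaternary Legendre pair of length `ℓ`. -/
def IsLegendrePair (ℓ : ℕ) (A B : ℕ → ℂ) : Prop :=
  IsQuaternary ℓ A ∧ IsQuaternary ℓ B ∧
    ∀ s, 1 ≤ s → s ≤ ℓ / 2 → PAF ℓ A s + PAF ℓ B s = -2


/-!
By the Wiener–Khinchin identity, `PSD(A, s)` is the Fourier transform of `conj PAF(A, ·)` at
`ω = ξ ^ s`. For a Legendre pair, `PAF(A, t) + PAF(B, t)` is `2ℓ` at `t = 0` and `-2` at every
other `t < ℓ` (for `t > ℓ / 2` use `PAF(A, ℓ - t) = conj PAF(A, t)`), i.e. it is `-2 + (2ℓ + 2) δ₀`.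
Since `∑ t < ℓ, ω ^ t = 0` for `ω ≠ 1`, its transform at `s` is `2ℓ + 2`.
-/

open Complex ComplexConjugate

lemma sum_range_add_mod {M : Type*} [AddCommMonoid M] (ℓ c : ℕ) (f : ℕ → M) :
    ∑ t ∈ range ℓ, f ((t + c) % ℓ) = ∑ t ∈ range ℓ, f t := by
  rcases ℓ with _ | n
  · simp
  rw [← Fin.sum_univ_eq_sum_range (fun t => f ((t + c) % (n + 1))), ← Fin.sum_univ_eq_sum_range]
  exact Fintype.sum_equiv (Equiv.addRight (Fin.ofNat (n + 1) c)) _ _ fun t => by simp [Fin.val_add]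

lemma conj_PAF (ℓ : ℕ) (A : ℕ → ℂ) (t : ℕ) :
    conj (PAF ℓ A t) = ∑ k ∈ range ℓ, conj (A k) * A ((k + t) % ℓ) := by
  simp [PAF, map_sum, mul_comm]

lemma PAF_sub (ℓ : ℕ) (A : ℕ → ℂ) {t : ℕ} (ht : t ≤ ℓ) :
    PAF ℓ A (ℓ - t) = conj (PAF ℓ A t) := by
  rw [conj_PAF, ← sum_range_add_mod ℓ (ℓ - t)]
  refine sum_congr rfl fun k hk => ?_
  have hk : ((k + (ℓ - t)) % ℓ + t) % ℓ = k := by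
    rw [Nat.mod_add_mod, show k + (ℓ - t) + t = k + ℓ by omega, Nat.add_mod_right,
      Nat.mod_eq_of_lt (mem_range.mp hk)]
  rw [hk, mul_comm]

lemma PAF_zero_of_norm_eq_one {ℓ : ℕ} {A : ℕ → ℂ} (hA : ∀ j < ℓ, ‖A j‖ = 1) :
    PAF ℓ A 0 = ℓ := by
  calc PAF ℓ A 0 = ∑ _j ∈ range ℓ, (1 : ℂ) := sum_congr rfl fun j hj => by
        rw [add_zero, Nat.mod_eq_of_lt (mem_range.mp hj), mul_conj', hA j (mem_range.mp hj)]
        norm_num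
    _ = ℓ := by simp

lemma IsQuaternary.norm_eq_one {ℓ : ℕ} {A : ℕ → ℂ} (hA : IsQuaternary ℓ A) :
    ∀ j < ℓ, ‖A j‖ = 1 := by
  intro j hj
  rcases hA j hj with h | h | h | h <;> simp [h]

lemma sum_mul_pow_mul_conj_eq_sum_conj_PAF {ℓ : ℕ} {ω : ℂ} (hω : ω ^ ℓ = 1) (A : ℕ → ℂ) :
    (∑ j ∈ range ℓ, A j * ω ^ j) * conj (∑ j ∈ range ℓ, A j * ω ^ j) =
      ∑ t ∈ range ℓ, conj (PAF ℓ A t) * ω ^ t := by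
  rcases Nat.eq_zero_or_pos ℓ with rfl | hℓ
  · simp
  have hωω : conj ω * ω = 1 := by
    rw [conj_mul', norm_eq_one_of_pow_eq_one hω hℓ.ne']
    norm_num
  have hpow (k t : ℕ) : ω ^ ((t + k) % ℓ) * conj ω ^ k = ω ^ t := by
    rw [← pow_eq_pow_mod _ hω, pow_add, mul_assoc, ← mul_pow, mul_comm ω, hωω, one_pow, mul_one]
  simp_rw [map_sum, sum_mul_sum, conj_PAF, sum_mul]
  conv_lhs => rw [sum_comm]
  conv_rhs => rw [sum_comm]
  refine sum_congr rfl fun k _ => ?_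
  rw [← sum_range_add_mod ℓ k]
  refine sum_congr rfl fun t _ => ?_
  rw [map_mul, map_pow, ← hpow k t, add_comm k t]
  ring

lemma DFT_eq_sum_mul_pow (ℓ : ℕ) (A : ℕ → ℂ) (s : ℕ) :
    DFT ℓ A s = ∑ j ∈ range ℓ, A j * (exp (2 * Real.pi * I / ℓ) ^ s) ^ j := by
  refine sum_congr rfl fun j _ => ?_
  rw [← pow_mul, ← exp_nat_mul]
  congr 2
  push_cast
  ring

lemma exp_two_pi_I_div_pow_pow_self (ℓ s : ℕ) : (exp (2 * Real.pi * I / ℓ) ^ s) ^ ℓ = 1 := by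
  rcases eq_or_ne ℓ 0 with rfl | hℓ
  · simp
  rw [pow_right_comm, (isPrimitiveRoot_exp ℓ hℓ).pow_eq_one, one_pow]

lemma PSD_eq_sum_conj_PAF_mul_pow (ℓ : ℕ) (A : ℕ → ℂ) (s : ℕ) :
    (PSD ℓ A s : ℂ) = ∑ t ∈ range ℓ, conj (PAF ℓ A t) * (exp (2 * Real.pi * I / ℓ) ^ s) ^ t := by
  rw [PSD, ofReal_pow, ← mul_conj', DFT_eq_sum_mul_pow]
  exact sum_mul_pow_mul_conj_eq_sum_conj_PAF (exp_two_pi_I_div_pow_pow_self ℓ s) A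

lemma sum_range_mul_pow_eq_sub_of_const {K : Type*} [Field K] {ℓ : ℕ} {ω : K} (hℓ : ℓ ≠ 0)
    (hωℓ : ω ^ ℓ = 1) (hω : ω ≠ 1) {c : ℕ → K} {b : K} (hc : ∀ t, 0 < t → t < ℓ → c t = b) :
    ∑ t ∈ range ℓ, c t * ω ^ t = c 0 - b := by
  obtain ⟨n, rfl⟩ := Nat.exists_eq_succ_of_ne_zero hℓ
  have hgeom : ∑ t ∈ range (n + 1), ω ^ t = 0 := by simp [geom_sum_eq hω, hωℓ]
  rw [sum_range_succ'] at hgeom ⊢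
  rw [sum_congr rfl fun t ht => by rw [hc (t + 1) t.succ_pos (by simpa using ht)], ← mul_sum]
  linear_combination b * hgeom

lemma IsLegendrePair.PAF_add_PAF {ℓ : ℕ} {A B : ℕ → ℂ} (h : IsLegendrePair ℓ A B) {t : ℕ}
    (ht₀ : 0 < t) (htℓ : t < ℓ) : PAF ℓ A t + PAF ℓ B t = -2 := by
  by_cases ht : t ≤ ℓ / 2
  · exact h.2.2 t ht₀ ht
  · have h' := h.2.2 (ℓ - t) (by omega) (by omega)
    rw [PAF_sub ℓ A htℓ.le, PAF_sub ℓ B htℓ.le, ← map_add] at h'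
    simpa [map_ofNat] using congrArg conj h'

theorem PSD_sum_of_legendrePair (ℓ : ℕ) (A B : ℕ → ℂ)
    (h : IsLegendrePair ℓ A B) (s : ℕ) (h1 : 1 ≤ s) (h2 : s ≤ ℓ - 1) :
    PSD ℓ A s + PSD ℓ B s = 2 * ℓ + 2 := by
  have hℓ : ℓ ≠ 0 := by omega
  set ω := exp (2 * Real.pi * I / ℓ) ^ s
  have hω : ω ≠ 1 := (isPrimitiveRoot_exp ℓ hℓ).pow_ne_one_of_pos_of_lt (by omega) (by omega)
  have hPAF₀ : PAF ℓ A 0 + PAF ℓ B 0 = 2 * ℓ := by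
    rw [PAF_zero_of_norm_eq_one h.1.norm_eq_one, PAF_zero_of_norm_eq_one h.2.1.norm_eq_one]
    ring
  have : ((PSD ℓ A s + PSD ℓ B s : ℝ) : ℂ) = 2 * ℓ + 2 :=
    calc ((PSD ℓ A s + PSD ℓ B s : ℝ) : ℂ)
        = ∑ t ∈ range ℓ, conj (PAF ℓ A t + PAF ℓ B t) * ω ^ t := by
          rw [ofReal_add, PSD_eq_sum_conj_PAF_mul_pow, PSD_eq_sum_conj_PAF_mul_pow,
            ← sum_add_distrib]
          exact sum_congr rfl fun t _ => by rw [map_add, add_mul]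
      _ = conj (PAF ℓ A 0 + PAF ℓ B 0) - conj (-2) :=
          sum_range_mul_pow_eq_sub_of_const hℓ (exp_two_pi_I_div_pow_pow_self ℓ s) hω
            fun t ht₀ htℓ => by rw [h.PAF_add_PAF ht₀ htℓ]
      _ = 2 * ℓ + 2 := by rw [hPAF₀, map_neg, map_mul, map_ofNat, conj_natCast]; ring
  exact_mod_cast this
end

section
/- Let ℓ = 2k be even and A ∈ {1,-1,i,-i}^ℓ with Σ_j a_j = 0. Then PSD(A, k) ≡ 2ℓ (mod 8). -/
open Finset

/-!
At `s = k` the exponentials in `DFT (2k) A k` are `(-1)^j`, so the DFT is `α₀ - α₁`, the even-indexed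
sum minus the odd-indexed one. As `α₀ + α₁ = 0`, it equals `2 α₀`, so `PSD = 4 N(α₀)` with `α₀` a
sum of `k` units of `ℤ[i]`. Modulo the prime `1 + i`, every unit is `1` and `N(z) ≡ z`
(as `N(z) = z z̄` and `z̄ ≡ z`), so `N(α₀) ≡ k (mod 2)`.
-/

open GaussianInt

lemma DFT_two_mul_self (k : ℕ) (A : ℕ → ℂ) :
    DFT (2 * k) A k = ∑ j ∈ range (2 * k), (-1) ^ j * A j := by
  rcases eq_or_ne k 0 with rfl | hk
  · simp [DFT]
  refine sum_congr rfl fun j _ => ?_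
  have hexp : 2 * Real.pi * Complex.I * j * k / (2 * k : ℕ) = j * (Real.pi * Complex.I) := by
    push_cast
    field_simp
  rw [hexp, Complex.exp_nat_mul, Complex.exp_pi_mul_I, mul_comm]

lemma sum_range_two_mul_neg_one_pow_mul_add_sum {R : Type*} [CommRing R] (k : ℕ) (f : ℕ → R) :
    ∑ j ∈ range (2 * k), (-1) ^ j * f j + ∑ j ∈ range (2 * k), f j
      = 2 * ∑ j ∈ range k, f (2 * j) := by
  induction k with
  | zero => simp
  | succ k ih =>
    rw [show 2 * (k + 1) = 2 * k + 1 + 1 by ring]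
    simp only [sum_range_succ, pow_succ, pow_mul]
    linear_combination ih

namespace GaussianInt

/-- Reduction modulo the prime `1 + i`, whose residue field is `ZMod 2`. -/
def toZModTwo : GaussianInt →+* ZMod 2 :=
  Zsqrtd.lift ⟨1, by decide⟩

lemma toZModTwo_apply (z : GaussianInt) : toZModTwo z = z.re + z.im := by
  simp [toZModTwo]

lemma intCast_norm_eq_toZModTwo (z : GaussianInt) : (z.norm : ZMod 2) = toZModTwo z := by
  rw [toZModTwo_apply, Zsqrtd.norm_def]
  push_cast
  generalize (z.re : ZMod 2) = a
  generalize (z.im : ZMod 2) = b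
  revert a b
  decide

lemma norm_sum_modEq_card {ι : Type*} (s : Finset ι) (u : ι → GaussianInt)
    (hu : ∀ i ∈ s, (u i).norm = 1) : (∑ i ∈ s, u i).norm ≡ #s [ZMOD 2] := by
  refine (ZMod.intCast_eq_intCast_iff _ _ 2).mp ?_
  rw [intCast_norm_eq_toZModTwo, map_sum]
  calc ∑ i ∈ s, toZModTwo (u i) = ∑ i ∈ s, (1 : ZMod 2) :=
        sum_congr rfl fun i hi => by rw [← intCast_norm_eq_toZModTwo, hu i hi, Int.cast_one]
    _ = _ := by simp

end GaussianInt

lemma IsQuaternary.exists_gaussianInt {ℓ : ℕ} {A : ℕ → ℂ} (hA : IsQuaternary ℓ A) :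
    ∃ u : ℕ → GaussianInt, ∀ j < ℓ, (u j).norm = 1 ∧ (u j : ℂ) = A j := by
  have hroot : ∀ j, ∃ g : GaussianInt, j < ℓ → g.norm = 1 ∧ (g : ℂ) = A j := fun j => by
    by_cases hj : j < ℓ
    · rcases hA j hj with h | h | h | h
      · exact ⟨⟨1, 0⟩, fun _ => ⟨rfl, by simp [toComplex_def, h]⟩⟩
      · exact ⟨⟨-1, 0⟩, fun _ => ⟨rfl, by simp [toComplex_def, h]⟩⟩
      · exact ⟨⟨0, 1⟩, fun _ => ⟨rfl, by simp [toComplex_def, h]⟩⟩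
      · exact ⟨⟨0, -1⟩, fun _ => ⟨rfl, by simp [toComplex_def, h]⟩⟩
    · exact ⟨0, fun h => absurd h hj⟩
  choose u hu using hroot
  exact ⟨u, fun j hj => hu j hj⟩

theorem PSD_half_mod_eight (k : ℕ) (A : ℕ → ℂ) (hA : IsQuaternary (2 * k) A)
    (hsum : ∑ j ∈ Finset.range (2 * k), A j = 0) :
    ∃ m : ℤ, PSD (2 * k) A k = (m : ℝ) ∧ m ≡ 2 * (2 * k : ℤ) [ZMOD 8] := by
  obtain ⟨u, hu⟩ := hA.exists_gaussianInt
  have hu_even : ∀ j ∈ range k, (u (2 * j)).norm = 1 ∧ (u (2 * j) : ℂ) = A (2 * j) :=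
    fun j hj => hu (2 * j) (by rw [mem_range] at hj; omega)
  set α : GaussianInt := ∑ j ∈ range k, u (2 * j)
  have hDFT : DFT (2 * k) A k = 2 * α := by
    rw [DFT_two_mul_self, ← add_zero (∑ j ∈ _, _), ← hsum,
      sum_range_two_mul_neg_one_pow_mul_add_sum, map_sum]
    exact congrArg (2 * ·) (sum_congr rfl fun j hj => (hu_even j hj).2.symm)
  have hα : α.norm ≡ k [ZMOD 2] := by
    simpa using norm_sum_modEq_card _ _ fun j hj => (hu_even j hj).1
  refine ⟨4 * α.norm, ?_, ?_⟩
  · rw [PSD, hDFT, Complex.sq_norm, Complex.normSq_mul, ← intCast_real_norm]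
    norm_num
  · calc 4 * α.norm ≡ 4 * k [ZMOD 4 * 2] := hα.mul_left'
      _ = 2 * (2 * k) := by ring
end

section
/- Let ℓ be divisible by 4 and A ∈ {1,-1,i,-i}^ℓ with Σ_j a_j = 0. Then PSD(A, ℓ/4) ≡ 2|α_0|² (mod 4), where α_0 is the sum of the even-indexed entries; in particular PSD(A, ℓ/4) ≡ 0 (mod 4). -/
/-!
Lift `A` to units `B j` of `ℤ[i]`. At frequency `ℓ / 4` the DFT is the Gaussian integer
`D = ∑ B j * i ^ j`, and the PSD is its norm. Since `∑ B j = 0`, `D = ∑ B j * (i ^ j + i)`, and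
modulo `2` the factor `i ^ j + i` is `1 + i` for even `j` and `0` for odd `j`; hence
`D ≡ (1 + i) * α₀ (mod 2)`. Gaussian integers congruent modulo `2` have norms congruent modulo `4`,
so `N D ≡ 2 * N α₀ (mod 4)`. Finally every unit is `≡ 1` modulo the prime `1 + i`, so `α₀`, a sum of
an even number of units, is divisible by `1 + i` and `N α₀` is even.
-/

open Finset

open Complex GaussianInt

local notation "ℤ[i]" => GaussianInt

theorem Finset.sum_range_two_mul {M : Type*} [AddCommMonoid M] (f : ℕ → M) (n : ℕ) :
    ∑ j ∈ range (2 * n), f j = ∑ k ∈ range n, f (2 * k) + ∑ k ∈ range n, f (2 * k + 1) := by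
  induction n with
  | zero => simp
  | succ n ih =>
    rw [Nat.mul_succ, sum_range_succ, sum_range_succ, ih, sum_range_succ, sum_range_succ]
    abel

theorem DFT_four_mul_self (A : ℕ → ℂ) (s : ℕ) :
    DFT (4 * s) A s = ∑ j ∈ range (4 * s), A j * I ^ j := by
  rcases eq_or_ne s 0 with rfl | hs
  · simp [DFT]
  refine sum_congr rfl fun j _ => ?_
  have : 2 * Real.pi * I * j * s / (4 * s : ℕ) = j * (Real.pi / 2 * I) := by
    push_cast
    field_simp
    ring
  rw [this, exp_nat_mul, exp_pi_div_two_mul_I]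

namespace GaussianInt

theorem toComplex_sqrtd : ((Zsqrtd.sqrtd : ℤ[i]) : ℂ) = I := by
  simp [toComplex_def]

theorem isUnit_sqrtd : IsUnit (Zsqrtd.sqrtd : ℤ[i]) :=
  IsUnit.of_mul_eq_one (-Zsqrtd.sqrtd) (by ext <;> simp)

theorem sqrtd_sq : (Zsqrtd.sqrtd : ℤ[i]) ^ 2 = -1 := by
  ext <;> simp [sq]

theorem norm_one_add_sqrtd : (1 + Zsqrtd.sqrtd : ℤ[i]).norm = 2 := rfl

/-- Reduction modulo the prime `1 + i`, sending `i` to `1`. -/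
def parity : ℤ[i] →+* ZMod 2 := Zsqrtd.lift ⟨1, by decide⟩

theorem parity_apply (z : ℤ[i]) : parity z = z.re + z.im := by simp [parity]

theorem parity_star (z : ℤ[i]) : parity (star z) = parity z := by
  simp [parity_apply, ZMod.neg_eq_self_mod_two]

theorem intCast_norm_eq_parity (z : ℤ[i]) : (z.norm : ZMod 2) = parity z := by
  rw [← map_intCast parity, Zsqrtd.norm_eq_mul_conj, map_mul, parity_star]
  generalize parity z = x
  fin_cases x <;> rfl

theorem parity_eq_one_of_isUnit {u : ℤ[i]} (hu : IsUnit u) : parity u = 1 := by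
  have := hu.map parity
  generalize parity u = x at this
  fin_cases x
  · exact absurd this not_isUnit_zero
  · rfl

theorem norm_modEq_four_of_two_dvd_sub {x y : ℤ[i]} (h : 2 ∣ x - y) :
    x.norm ≡ y.norm [ZMOD 4] := by
  obtain ⟨w, hw⟩ := h
  rw [sub_eq_iff_eq_add'.mp hw, Int.modEq_iff_dvd]
  exact ⟨-(y.re * w.re + y.im * w.im + w.norm), by simp [Zsqrtd.norm_def]; ring⟩

theorem two_dvd_sum_mul_sqrtd_pow_sub {B : ℕ → ℤ[i]} {n : ℕ}
    (hB : ∑ j ∈ range (2 * n), B j = 0) :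
    2 ∣ ∑ j ∈ range (2 * n), B j * Zsqrtd.sqrtd ^ j -
      (1 + Zsqrtd.sqrtd) * ∑ k ∈ range n, B (2 * k) := by
  set i : ℤ[i] := Zsqrtd.sqrtd
  have hpow : ∀ k, i ^ (2 * k) = (-1) ^ k := fun k => by rw [pow_mul, sqrtd_sq]
  have h2 : ∀ k, (2 : ℤ[i]) ∣ (-1) ^ k - 1 ∧ (2 : ℤ[i]) ∣ (-1) ^ k + 1 := fun k => by
    rcases neg_one_pow_eq_or ℤ[i] k with h | h <;> rw [h]
    · exact ⟨⟨0, by ring⟩, ⟨1, by ring⟩⟩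
    · exact ⟨⟨-1, by ring⟩, ⟨0, by ring⟩⟩
  have hsplit : ∑ j ∈ range (2 * n), B j * i ^ j - (1 + i) * ∑ k ∈ range n, B (2 * k) =
      ∑ k ∈ range n, B (2 * k) * ((-1) ^ k - 1) +
        ∑ k ∈ range n, B (2 * k + 1) * ((-1) ^ k + 1) * i := by
    have hodd := hB
    rw [sum_range_two_mul] at hodd
    simp only [sum_range_two_mul, pow_succ, hpow, ← mul_assoc, mul_sub, mul_add, add_mul,
      sum_sub_distrib, sum_add_distrib, ← sum_mul, mul_one]
    linear_combination (-i) * hodd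
  rw [hsplit]
  exact dvd_add (dvd_sum fun k _ => (h2 k).1.mul_left _)
    (dvd_sum fun k _ => ((h2 k).2.mul_left _).mul_right _)

theorem norm_sum_mul_sqrtd_pow_modEq {B : ℕ → ℤ[i]} {n : ℕ}
    (hB : ∑ j ∈ range (2 * n), B j = 0) :
    (∑ j ∈ range (2 * n), B j * Zsqrtd.sqrtd ^ j).norm ≡
      2 * (∑ k ∈ range n, B (2 * k)).norm [ZMOD 4] := by
  simpa [Zsqrtd.norm_mul, norm_one_add_sqrtd] using
    norm_modEq_four_of_two_dvd_sub (two_dvd_sum_mul_sqrtd_pow_sub hB)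

theorem two_dvd_norm_sum_of_isUnit {B : ℕ → ℤ[i]} {n : ℕ} (hB : ∀ k < n, IsUnit (B k))
    (hn : Even n) : 2 ∣ (∑ k ∈ range n, B k).norm := by
  refine (ZMod.intCast_zmod_eq_zero_iff_dvd _ 2).1 ?_
  rw [intCast_norm_eq_parity, map_sum,
    sum_congr rfl fun k hk => parity_eq_one_of_isUnit (hB k (mem_range.1 hk))]
  simpa [ZMod.natCast_eq_zero_iff_even] using hn

end GaussianInt

theorem IsQuaternary.exists_gaussianInt_lift {ℓ : ℕ} {A : ℕ → ℂ} (hA : IsQuaternary ℓ A) :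
    ∃ B : ℕ → ℤ[i], ∀ j < ℓ, IsUnit (B j) ∧ (B j : ℂ) = A j := by
  have h : ∀ j < ℓ, ∃ u : ℤ[i], IsUnit u ∧ (u : ℂ) = A j := by
    intro j hj
    rcases hA j hj with h | h | h | h <;> rw [h]
    · exact ⟨1, isUnit_one, map_one _⟩
    · exact ⟨-1, isUnit_one.neg, by simp⟩
    · exact ⟨_, isUnit_sqrtd, toComplex_sqrtd⟩
    · exact ⟨_, isUnit_sqrtd.neg, by simp [toComplex_sqrtd]⟩
  choose! B hB using h
  exact ⟨B, hB⟩

theorem PSD_quarter_mod_four (ℓ : ℕ) (hℓ : 4 ∣ ℓ) (A : ℕ → ℂ)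
    (hA : IsQuaternary ℓ A) (hsum : ∑ j ∈ Finset.range ℓ, A j = 0) :
    ∃ m n : ℤ, PSD ℓ A (ℓ / 4) = (m : ℝ) ∧
      ‖∑ j ∈ Finset.range (ℓ / 2), A (2 * j)‖ ^ 2 = (n : ℝ) ∧
      m ≡ 2 * n [ZMOD 4] ∧ m ≡ 0 [ZMOD 4] := by
  obtain ⟨L, rfl⟩ := hℓ
  obtain ⟨B, hB⟩ := hA.exists_gaussianInt_lift
  have h4 : 4 * L = 2 * (2 * L) := by ring
  set C := ∑ k ∈ range (2 * L), B (2 * k)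
  set D := ∑ j ∈ range (2 * (2 * L)), B j * Zsqrtd.sqrtd ^ j
  have hD : DFT (4 * L) A (4 * L / 4) = D := by
    rw [Nat.mul_div_cancel_left L (by norm_num), DFT_four_mul_self, map_sum, h4]
    refine sum_congr rfl fun j hj => ?_
    rw [map_mul, map_pow, toComplex_sqrtd, (hB j (h4 ▸ mem_range.1 hj)).2]
  have hC : ∑ k ∈ range (4 * L / 2), A (2 * k) = C := by
    rw [show 4 * L / 2 = 2 * L by omega, map_sum]
    exact sum_congr rfl fun k hk => ((hB (2 * k) (by simp at hk; omega)).2).symm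
  have hBsum : ∑ j ∈ range (2 * (2 * L)), B j = 0 := by
    apply toComplex_injective
    rw [map_sum, map_zero, ← h4, ← hsum]
    exact sum_congr rfl fun j hj => (hB j (mem_range.1 hj)).2
  have hmod : D.norm ≡ 2 * C.norm [ZMOD 4] := norm_sum_mul_sqrtd_pow_modEq hBsum
  have hCeven : 2 ∣ C.norm :=
    two_dvd_norm_sum_of_isUnit (fun k hk => (hB (2 * k) (by omega)).1) (even_two_mul L)
  refine ⟨D.norm, C.norm, ?_, ?_, hmod, hmod.trans (Int.modEq_zero_iff_dvd.2 ?_)⟩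
  · rw [PSD, hD, Complex.sq_norm, intCast_real_norm]
  · rw [hC, Complex.sq_norm, intCast_real_norm]
  · exact mul_dvd_mul_left 2 hCeven
end

section
/- Let q > 2 be a prime. If m = |α|² is a (rational) integer for some α ∈ ℚ(ξ_q), then every rational prime p dividing the square-free part of m satisfies p = q or the multiplicative order of p modulo q is odd. -/
/-!
Clearing denominators, `N = d² m` is `‖g(ζ)‖²` for some `g ∈ ℤ[X]`, so
`Φ_q ∣ g · g(X^(q-1)) - N` since `conj ζ = ζ^(q-1)`. If `p ≠ q` had even order `2k` mod `q`, then `p^k ≡ -1 (mod q)`, so the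
`k`-th power of Frobenius acts on `𝔽_p[X]/Φ_q` as complex conjugation `t ↦ t^(q-1)`. Hence if
`p ∣ N`, then `ḡ^(p^k+1) ≡ ḡ · ḡ(X^(q-1)) ≡ 0`, and as `Φ_q` is squarefree mod `p`,
`g(ζ) = p w(ζ)`.
Then `‖w(ζ)‖² = N/p²` is a rational algebraic integer, hence an integer, and descending on `N`
shows that `p` divides `N`, and hence `m`, to an even power.
-/

open Polynomial ComplexConjugate

theorem pow_eq_neg_one_of_orderOf_eq_two_mul {R : Type*} [CommRing R] [NoZeroDivisors R] {a : R}
    {k : ℕ} (hk : k ≠ 0) (h : orderOf a = 2 * k) : a ^ k = -1 := by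
  refine IsPrimitiveRoot.eq_neg_one_of_two_right ?_
  have := (IsPrimitiveRoot.orderOf a).pow_of_dvd hk (h ▸ dvd_mul_left k 2)
  rwa [h, Nat.mul_div_cancel _ (Nat.pos_of_ne_zero hk)] at this

namespace ZMod

variable {p : ℕ} [Fact p.Prime]

theorem expand_prime_pow (k : ℕ) (f : (ZMod p)[X]) : expand (ZMod p) (p ^ k) f = f ^ p ^ k := by
  induction k with
  | zero => simp
  | succ k ih => rw [pow_succ, expand_mul, expand_card, map_pow, ih, pow_mul]

theorem cyclotomic_dvd_of_dvd_mul_comp_X_pow {n k j : ℕ} (hpn : ¬ p ∣ n)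
    (hj : p ^ k ≡ j [MOD n]) {f : (ZMod p)[X]}
    (h : cyclotomic n (ZMod p) ∣ f * f.comp (X ^ j)) : cyclotomic n (ZMod p) ∣ f := by
  have : NeZero (n : ZMod p) := ⟨by rwa [Ne, ZMod.natCast_eq_zero_iff]⟩
  set Φ := cyclotomic n (ZMod p)
  have hroot : AdjoinRoot.root Φ ^ p ^ k = AdjoinRoot.root Φ ^ j := by
    refine pow_eq_pow_of_modEq hj ?_
    simpa [sub_eq_zero] using AdjoinRoot.mk_eq_zero.2 (cyclotomic.dvd_X_pow_sub_one n (ZMod p))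
  -- `f(t)^(p^k) = f(t^(p^k)) = f(t^j)` at the root `t` of `Φ`
  have : Φ ∣ f ^ (p ^ k + 1) := by
    rw [← AdjoinRoot.mk_eq_zero] at h ⊢
    rw [pow_succ', ← expand_prime_pow, expand_eq_comp_X_pow]
    simpa [← AdjoinRoot.aeval_eq, aeval_comp, hroot] using h
  exact (squarefree_cyclotomic n _).dvd_pow_iff_dvd (Nat.succ_ne_zero _) |>.1 this

end ZMod

theorem Polynomial.exists_eq_mul_add_C_mul_of_map_dvd {f g : ℤ[X]} (hf : f.Monic) (n : ℕ)
    (h : f.map (Int.castRingHom (ZMod n)) ∣ g.map (Int.castRingHom (ZMod n))) :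
    ∃ u w : ℤ[X], g = f * u + C (n : ℤ) * w := by
  have hmod : (g %ₘ f).map (Int.castRingHom (ZMod n)) = 0 := by
    rw [map_modByMonic _ hf, (modByMonic_eq_zero_iff_dvd (hf.map _)).2 h]
  obtain ⟨w, hw⟩ : C (n : ℤ) ∣ g %ₘ f := by
    refine C_dvd_iff_dvd_coeff _ _ |>.2 fun i => ?_
    simpa [ZMod.intCast_zmod_eq_zero_iff_dvd] using congr_arg (coeff · i) hmod
  exact ⟨g /ₘ f, w, by rw [← hw, add_comm, modByMonic_add_div]⟩

theorem Complex.exists_nat_eq_of_norm_sq_eq_rat {x : ℂ} (hx : IsIntegral ℤ x) {r : ℚ}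
    (h : ‖x‖ ^ 2 = r) : ∃ M : ℕ, r = M := by
  have hr : IsIntegral ℤ (algebraMap ℚ ℂ r) := by
    have := hx.mul (hx.map (starRingEnd ℂ).toIntAlgHom)
    rwa [RingHom.toIntAlgHom_apply, Complex.mul_conj', ← Complex.ofReal_pow, h] at this
  obtain ⟨M, rfl⟩ := IsIntegrallyClosed.isIntegral_iff.1
    ((isIntegral_algebraMap_iff (algebraMap ℚ ℂ).injective).1 hr)
  rw [algebraMap_int_eq, eq_intCast] at h ⊢
  lift M to ℕ using (by exact_mod_cast h ▸ sq_nonneg ‖x‖)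
  exact ⟨M, by simp⟩

namespace IsPrimitiveRoot

variable {n : ℕ} {ζ : ℂ}

theorem conj_eq_pow (hζ : IsPrimitiveRoot ζ n) (hn : n ≠ 0) : conj ζ = ζ ^ (n - 1) := by
  refine mul_left_cancel₀ (hζ.ne_zero hn) ?_
  rw [Complex.mul_conj', hζ.norm'_eq_one hn, ← pow_succ', Nat.sub_add_cancel (by omega),
    hζ.pow_eq_one]
  simp

theorem conj_aeval (hζ : IsPrimitiveRoot ζ n) (hn : n ≠ 0) (g : ℤ[X]) :
    conj (aeval ζ g) = aeval ζ (g.comp (X ^ (n - 1))) := by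
  rw [aeval_comp, map_pow, aeval_X, ← hζ.conj_eq_pow hn]
  exact (aeval_algHom_apply (starRingEnd ℂ).toIntAlgHom ζ g).symm

theorem isIntegral_aeval (hζ : IsPrimitiveRoot ζ n) (hn : n ≠ 0) (g : ℤ[X]) :
    IsIntegral ℤ (aeval ζ g) := by
  have := (aeval (⟨ζ, hζ.isIntegral (Nat.pos_of_ne_zero hn)⟩ : integralClosure ℤ ℂ) g).2
  rwa [← Subalgebra.aeval_coe] at this

theorem cyclotomic_dvd_of_norm_sq_eq (hζ : IsPrimitiveRoot ζ n) (hn : n ≠ 0) {g : ℤ[X]} {N : ℕ}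
    (h : ‖aeval ζ g‖ ^ 2 = N) : cyclotomic n ℤ ∣ g * g.comp (X ^ (n - 1)) - C (N : ℤ) := by
  rw [cyclotomic_eq_minpoly hζ (Nat.pos_of_ne_zero hn)]
  refine minpoly.isIntegrallyClosed_dvd (hζ.isIntegral (Nat.pos_of_ne_zero hn)) ?_
  rw [map_sub, map_mul, ← hζ.conj_aeval hn, Complex.mul_conj', ← Complex.ofReal_pow, h]
  simp

variable {p k : ℕ} [Fact p.Prime]

theorem exists_aeval_eq_mul_of_norm_sq_eq (hζ : IsPrimitiveRoot ζ n) (hpn : ¬ p ∣ n)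
    (hk : (p : ZMod n) ^ k = -1) {g : ℤ[X]} {N : ℕ} (h : ‖aeval ζ g‖ ^ 2 = N) (hpN : p ∣ N) :
    ∃ w : ℤ[X], aeval ζ g = p * aeval ζ w := by
  have hn : n ≠ 0 := by rintro rfl; exact hpn (dvd_zero p)
  have hpk : p ^ k ≡ n - 1 [MOD n] := by
    have : NeZero n := ⟨hn⟩
    rw [← ZMod.natCast_eq_natCast_iff, Nat.cast_sub (Nat.one_le_iff_ne_zero.2 hn)]
    simpa using hk
  set gbar := g.map (Int.castRingHom (ZMod p))
  have hbar : cyclotomic n (ZMod p) ∣ gbar * gbar.comp (X ^ (n - 1)) := by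
    simpa [gbar, Polynomial.map_comp, (CharP.cast_eq_zero_iff (ZMod p)[X] p N).2 hpN] using
      map_dvd (Int.castRingHom (ZMod p)) (hζ.cyclotomic_dvd_of_norm_sq_eq hn h)
  obtain ⟨u, w, rfl⟩ := exists_eq_mul_add_C_mul_of_map_dvd (g := g) (cyclotomic.monic n ℤ) p
    (by rw [map_cyclotomic]; exact ZMod.cyclotomic_dvd_of_dvd_mul_comp_X_pow hpn hpk hbar)
  refine ⟨w, ?_⟩
  rw [map_add, map_mul, cyclotomic_eq_minpoly hζ (Nat.pos_of_ne_zero hn), minpoly.aeval]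
  simp

theorem exists_norm_sq_eq_of_prime_dvd (hζ : IsPrimitiveRoot ζ n) (hpn : ¬ p ∣ n)
    (hk : (p : ZMod n) ^ k = -1) {g : ℤ[X]} {N : ℕ} (h : ‖aeval ζ g‖ ^ 2 = N) (hpN : p ∣ N) :
    ∃ M : ℕ, N = p ^ 2 * M ∧ ∃ w : ℤ[X], ‖aeval ζ w‖ ^ 2 = M := by
  have hn : n ≠ 0 := by rintro rfl; exact hpn (dvd_zero p)
  have hp0 : p ≠ 0 := (Fact.out : p.Prime).ne_zero
  obtain ⟨w, hw⟩ := hζ.exists_aeval_eq_mul_of_norm_sq_eq hpn hk h hpN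
  have hwN : ‖aeval ζ w‖ ^ 2 = ((N / p ^ 2 : ℚ) : ℝ) := by
    rw [hw, norm_mul, mul_pow, Complex.norm_natCast] at h
    push_cast
    rw [← h]
    field_simp [Nat.cast_ne_zero.2 hp0]
  obtain ⟨M, hM⟩ := Complex.exists_nat_eq_of_norm_sq_eq_rat (hζ.isIntegral_aeval hn w) hwN
  refine ⟨M, ?_, w, by rw [hwN, hM]; simp⟩
  rw [div_eq_iff (pow_ne_zero 2 (Nat.cast_ne_zero.2 hp0))] at hM
  exact_mod_cast hM.trans (mul_comm _ _)

theorem even_factorization_of_norm_sq_eq (hζ : IsPrimitiveRoot ζ n) (hpn : ¬ p ∣ n)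
    (hk : (p : ZMod n) ^ k = -1) {g : ℤ[X]} {N : ℕ} (h : ‖aeval ζ g‖ ^ 2 = N) (hN : N ≠ 0) :
    Even (N.factorization p) := by
  induction N using Nat.strong_induction_on generalizing g with
  | _ N ih =>
  by_cases hpN : p ∣ N
  · have hp : p.Prime := Fact.out
    obtain ⟨M, rfl, w, hw⟩ := hζ.exists_norm_sq_eq_of_prime_dvd hpn hk h hpN
    have hM : M ≠ 0 := by rintro rfl; simp at hN
    have hlt : M < p ^ 2 * M :=
      lt_mul_left (Nat.pos_of_ne_zero hM) (Nat.one_lt_pow two_ne_zero hp.one_lt)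
    rw [Nat.factorization_mul (pow_ne_zero 2 hp.ne_zero) hM, Finsupp.add_apply,
      Nat.factorization_pow, Finsupp.smul_apply, hp.factorization_self]
    exact even_two.add (ih M hlt hw hM)
  · rw [Nat.factorization_eq_zero_of_not_dvd hpN]
    exact ⟨0, rfl⟩

end IsPrimitiveRoot

theorem norm_cyclotomic_prime_condition_general (q : ℕ) (hq : q.Prime)
    (P : Polynomial ℚ) (m : ℕ)
    (hm : ‖Polynomial.aeval (Complex.exp (2 * Real.pi * Complex.I / q)) P‖ ^ 2
      = (m : ℝ)) :
    ∀ p : ℕ, p.Prime → ¬ Even (m.factorization p) →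
      p = q ∨ Odd (orderOf ((p : ZMod q))) := by
  intro p hp hmp
  have : Fact q.Prime := ⟨hq⟩
  have : Fact p.Prime := ⟨hp⟩
  have hm0 : m ≠ 0 := by rintro rfl; simp at hmp
  refine or_iff_not_imp_left.2 fun hpq => Nat.not_even_iff_odd.1 fun ⟨k, hk⟩ => hmp ?_
  have hqp : ¬ q ∣ p := fun h => hpq ((Nat.prime_dvd_prime_iff_eq hq hp).1 h).symm
  have hpq' : ¬ p ∣ q := fun h => hpq ((Nat.prime_dvd_prime_iff_eq hp hq).1 h)
  have hord : orderOf (p : ZMod q) ≠ 0 := Nat.pos_iff_ne_zero.1 <| Nat.pos_of_dvd_of_pos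
    (ZMod.orderOf_dvd_card_sub_one (by rwa [Ne, ZMod.natCast_eq_zero_iff]))
    (by have := hq.two_le; omega)
  have hpk := pow_eq_neg_one_of_orderOf_eq_two_mul (by omega) (hk.trans (two_mul k).symm)
  obtain ⟨d, hd, hdP⟩ := IsLocalization.integerNormalization_spec (nonZeroDivisors ℤ) P
  replace hd : d.natAbs ≠ 0 := by simpa using nonZeroDivisors.ne_zero hd
  have hg : ‖aeval (Complex.exp (2 * Real.pi * Complex.I / q))
      (IsLocalization.integerNormalization (nonZeroDivisors ℤ) P)‖ ^ 2
      = (d.natAbs ^ 2 * m : ℕ) := by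
    rw [← aeval_map_algebraMap ℚ, hdP, map_zsmul, zsmul_eq_mul, norm_mul, mul_pow, hm]
    simp
  have hN := (Complex.isPrimitiveRoot_exp q hq.ne_zero).even_factorization_of_norm_sq_eq hpq' hpk
    hg (by positivity)
  rw [Nat.factorization_mul (by positivity) hm0, Finsupp.add_apply, Nat.factorization_pow] at hN
  exact (Nat.even_add.1 hN).1 (by simp)

theorem norm_cyclotomic_prime_condition (q : ℕ) (hq : q.Prime) (hq2 : 2 < q)
    (P : Polynomial ℚ) (m : ℕ)
    (hm : ‖Polynomial.aeval (Complex.exp (2 * Real.pi * Complex.I / q)) P‖ ^ 2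
      = (m : ℝ)) :
    ∀ p : ℕ, p.Prime → ¬ Even (m.factorization p) →
      p = q ∨ Odd (orderOf ((p : ZMod q))) :=
  norm_cyclotomic_prime_condition_general q hq P m hm
end

section
/- If q ≡ 3 (mod 4) is prime and m = |α|² ∈ ℤ for some α ∈ ℚ(ξ_q), then every prime p ≠ q dividing the square-free part of m is a quadratic residue modulo q. -/
/-!
Write `α = P(ζ)`. As `ζ̄ = ζ^(q-1)`, clearing denominators gives `e²m = Q(ζ) Q(ζ^(q-1))` with
`Q ∈ ℤ[X]`. If `p` is not a square mod `q`, Euler's criterion gives `p^(q/2) ≡ -1 (mod q)`, so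
modulo `p` complex conjugation is a power of Frobenius: `Q(ζ^(q-1)) ≡ Q(ζ)^(p^j)`. Hence if
`p ∣ e²m` then `Q(ζ)^(p^j+1) = 0` in the reduced ring `𝔽_p[X]/(Φ_q)`, so `p ∣ Q(ζ)`, `p² ∣ e²m`,
and `e²m/p²` is again of the same form. Descending, `v_p(e²m)` is even, hence so is `v_p(m)`.
-/

open Polynomial

theorem ZMod.pow_div_two_eq_neg_one_of_not_isSquare {q : ℕ} [Fact q.Prime] {a : ZMod q}
    (ha : ¬IsSquare a) : a ^ (q / 2) = -1 := by
  have ha0 : a ≠ 0 := by rintro rfl; exact ha .zero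
  exact (pow_div_two_eq_neg_one_or_one q ha0).resolve_left (mt (euler_criterion q ha0).mpr ha)

theorem FiniteField.aeval_pow_card_pow {K A : Type*} [Field K] [Fintype K] [CommRing A]
    [Algebra K A] (Q : K[X]) (a : A) (j : ℕ) :
    aeval (a ^ Fintype.card K ^ j) Q = aeval a Q ^ Fintype.card K ^ j := by
  induction j with
  | zero => simp
  | succ j ih =>
    rw [pow_succ, pow_mul, pow_mul, ← expand_aeval, FiniteField.expand_card, map_pow, ih]

theorem FiniteField.cyclotomic_dvd_of_dvd_mul_comp {K : Type*} [Field K] [Fintype K] {n j : ℕ}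
    [NeZero (n : K)] (hn : n ∣ Fintype.card K ^ j + 1) {Q : K[X]}
    (h : cyclotomic n K ∣ Q * Q.comp (X ^ (n - 1))) : cyclotomic n K ∣ Q := by
  set r := Fintype.card K
  set a := AdjoinRoot.root (cyclotomic n K)
  have hn0 : n ≠ 0 := by rintro rfl; simp at hn
  have ha : a ^ n = 1 := by
    have := AdjoinRoot.mk_eq_zero.mpr (cyclotomic.dvd_X_pow_sub_one n K)
    rwa [map_sub, map_pow, map_one, AdjoinRoot.mk_X, sub_eq_zero] at this
  have hconj : a ^ (n - 1) = a ^ r ^ j := by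
    refine (left_inv_eq_right_inv (a := a) ?_ ?_).symm
    · obtain ⟨k, hk⟩ := hn
      rw [← pow_succ, hk, pow_mul, ha, one_pow]
    · rw [← pow_succ', Nat.sub_add_cancel (Nat.one_le_iff_ne_zero.mpr hn0), ha]
  have hQa : aeval a Q ^ (r ^ j + 1) = 0 := by
    have := AdjoinRoot.mk_eq_zero.mpr h
    rwa [← AdjoinRoot.aeval_eq, map_mul, aeval_comp, map_pow, aeval_X, hconj,
      FiniteField.aeval_pow_card_pow, ← pow_succ'] at this
  have : cyclotomic n K ∣ Q ^ (r ^ j + 1) := by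
    rwa [← AdjoinRoot.mk_eq_zero, ← AdjoinRoot.aeval_eq, map_pow]
  exact ((squarefree_cyclotomic n K).dvd_pow_iff_dvd (Nat.succ_ne_zero _)).mp this

theorem Polynomial.C_dvd_iff_map_intCast_eq_zero {p : ℕ} {g : ℤ[X]} :
    C (p : ℤ) ∣ g ↔ g.map (Int.castRingHom (ZMod p)) = 0 := by
  rw [C_dvd_iff_dvd_coeff, Polynomial.ext_iff]
  simp [ZMod.intCast_zmod_eq_zero_iff_dvd]

theorem Polynomial.exists_eq_mul_add_C_mul_of_map_dvd_s17 {p : ℕ} {f Q : ℤ[X]}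
    (h : f.map (Int.castRingHom (ZMod p)) ∣ Q.map (Int.castRingHom (ZMod p))) :
    ∃ H Q₁ : ℤ[X], Q = f * H + C (p : ℤ) * Q₁ := by
  obtain ⟨Hb, hHb⟩ := h
  obtain ⟨H, rfl⟩ := map_surjective (Int.castRingHom (ZMod p)) (ZMod.ringHom_surjective _) Hb
  obtain ⟨Q₁, hQ₁⟩ : C (p : ℤ) ∣ Q - f * H := by
    rw [C_dvd_iff_map_intCast_eq_zero, Polynomial.map_sub, Polynomial.map_mul, hHb, sub_self]
  exact ⟨H, Q₁, by linear_combination hQ₁⟩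

theorem Polynomial.Monic.natCast_dvd_of_dvd_C_mul_sub_C {f g : ℤ[X]} (hf : f.Monic)
    (hdeg : 0 < f.natDegree) {a c : ℕ} (h : f ∣ C (a : ℤ) * g - C (c : ℤ)) : a ∣ c := by
  rcases eq_or_ne a 1 with rfl | ha1
  · exact one_dvd c
  have : Nontrivial (ZMod a) := ZMod.nontrivial_iff.mpr ha1
  have hmod := Polynomial.map_dvd (Int.castRingHom (ZMod a)) h
  simp only [Polynomial.map_sub, Polynomial.map_mul, map_natCast, Polynomial.map_natCast,
    CharP.cast_eq_zero, zero_mul, zero_sub, dvd_neg] at hmod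
  by_contra hac
  refine (hf.map _).not_dvd_of_natDegree_lt ?_ ?_ hmod
  · rwa [← C_eq_natCast, Ne, C_eq_zero, ZMod.natCast_eq_zero_iff]
  · rwa [natDegree_natCast, hf.natDegree_map]

theorem Polynomial.Monic.dvd_of_dvd_C_mul {R : Type*} [CommRing R] [IsDomain R] {f g : R[X]}
    (hf : f.Monic) {a : R} (ha : a ≠ 0) (h : f ∣ C a * g) : f ∣ g := by
  rw [← modByMonic_eq_zero_iff_dvd hf] at h ⊢
  rw [← smul_eq_C_mul, smul_modByMonic] at h
  exact (smul_eq_zero.mp h).resolve_left ha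

theorem Polynomial.cyclotomic_dvd_comp_X_pow_pred (n : ℕ) :
    cyclotomic n ℤ ∣ (cyclotomic n ℤ).comp (X ^ (n - 1)) := by
  rcases n.eq_zero_or_pos with rfl | hn
  · simp
  have hζ := Complex.isPrimitiveRoot_exp n hn.ne'
  have hζ' := hζ.pow_of_coprime (n - 1)
    ((Nat.coprime_self_sub_left hn).mpr (Nat.coprime_one_left n))
  rw [cyclotomic_eq_minpoly hζ hn]
  refine minpoly.isIntegrallyClosed_dvd (hζ.isIntegral hn) ?_
  rw [aeval_comp, map_pow, aeval_X, ← cyclotomic_eq_minpoly hζ hn, aeval_def, ← eval_map,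
    map_cyclotomic]
  exact hζ'.isRoot_cyclotomic hn

theorem IsPrimitiveRoot.conj_eq_pow_pred {ζ : ℂ} {n : ℕ} (hn : n ≠ 0)
    (hζ : IsPrimitiveRoot ζ n) : starRingEnd ℂ ζ = ζ ^ (n - 1) := by
  have h1 : ζ * starRingEnd ℂ ζ = 1 := by
    rw [Complex.mul_conj', hζ.norm'_eq_one hn]
    simp
  have h2 : ζ ^ (n - 1) * ζ = 1 := by
    rw [← pow_succ, Nat.sub_add_cancel (Nat.one_le_iff_ne_zero.mpr hn), hζ.pow_eq_one]
  exact (left_inv_eq_right_inv h2 h1).symm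

theorem IsPrimitiveRoot.cyclotomic_dvd_mul_comp_sub_C_of_norm_sq {ζ : ℂ} {n : ℕ} (hn : n ≠ 0)
    (hζ : IsPrimitiveRoot ζ n) {P : ℚ[X]} {m : ℚ} (hm : ‖aeval ζ P‖ ^ 2 = m) :
    cyclotomic n ℚ ∣ P * P.comp (X ^ (n - 1)) - C m := by
  rw [cyclotomic_eq_minpoly_rat hζ (Nat.pos_of_ne_zero hn)]
  refine minpoly.dvd ℚ ζ ?_
  have hconj : aeval (ζ ^ (n - 1)) P = starRingEnd ℂ (aeval ζ P) := by
    rw [← hζ.conj_eq_pow_pred hn]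
    exact aeval_algHom_apply (Complex.conjAe.restrictScalars ℚ) ζ P
  rw [map_sub, map_mul, aeval_comp, map_pow, aeval_X, hconj, Complex.mul_conj',
    ← Complex.ofReal_pow, hm, aeval_C]
  simp

/-- `c = Q(ζ) Q(ζ⁻¹)` for some `Q ∈ ℤ[X]`, where `ζ` is a primitive `n`-th root of unity,
so that `ζ⁻¹ = ζ^(n-1)`. -/
def IsCyclotomicNorm (n c : ℕ) : Prop :=
  ∃ Q : ℤ[X], cyclotomic n ℤ ∣ Q * Q.comp (X ^ (n - 1)) - C (c : ℤ)

theorem exists_isCyclotomicNorm_sq_mul {n m : ℕ} {P : ℚ[X]}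
    (h : cyclotomic n ℚ ∣ P * P.comp (X ^ (n - 1)) - C (m : ℚ)) :
    ∃ e : ℕ, e ≠ 0 ∧ IsCyclotomicNorm n (e ^ 2 * m) := by
  obtain ⟨b, hb0, hb⟩ := IsLocalization.integerNormalization_spec (nonZeroDivisors ℤ) P
  set Q := IsLocalization.integerNormalization (nonZeroDivisors ℤ) P
  refine ⟨b.natAbs, Int.natAbs_ne_zero.mpr (nonZeroDivisors.ne_zero hb0), Q, ?_⟩
  rw [← map_dvd_map (Int.castRingHom ℚ) Int.cast_injective (cyclotomic.monic n ℤ)]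
  have hQ : Q.map (Int.castRingHom ℚ) = C (b : ℚ) * P := by
    rw [← smul_eq_C_mul, Int.cast_smul_eq_zsmul]
    exact hb
  have hmap :
      (Q * Q.comp (X ^ (n - 1)) - C ((b.natAbs ^ 2 * m : ℕ) : ℤ)).map (Int.castRingHom ℚ) =
        C (b : ℚ) ^ 2 * (P * P.comp (X ^ (n - 1)) - C (m : ℚ)) := by
    rw [Polynomial.map_sub, Polynomial.map_mul, map_comp, hQ, Polynomial.map_pow, map_X, map_C]
    simp only [mul_comp, C_comp]
    push_cast
    rw [sq_abs, eq_intCast, Int.cast_mul, Int.cast_pow, Int.cast_natCast, C_mul, C_pow]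
    ring
  rw [hmap, map_cyclotomic]
  exact h.mul_left _

namespace IsCyclotomicNorm

variable {n c p j : ℕ}

theorem exists_cyclotomic_dvd_C_sq_mul_sub_C (hc : IsCyclotomicNorm n c) (hp : p.Prime)
    (hpn : ¬p ∣ n) (hn : n ∣ p ^ j + 1) (hpc : p ∣ c) :
    ∃ Q₁ : ℤ[X], cyclotomic n ℤ ∣ C ((p : ℤ) ^ 2) * (Q₁ * Q₁.comp (X ^ (n - 1))) - C (c : ℤ) := by
  have := Fact.mk hp
  have : NeZero (n : ZMod p) := ⟨by rwa [Ne, ZMod.natCast_eq_zero_iff]⟩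
  obtain ⟨Q, hQ⟩ := hc
  have hmod : cyclotomic n (ZMod p) ∣
      Q.map (Int.castRingHom _) * (Q.map (Int.castRingHom _)).comp (X ^ (n - 1)) := by
    have := Polynomial.map_dvd (Int.castRingHom (ZMod p)) hQ
    rwa [Polynomial.map_sub, Polynomial.map_mul, map_comp, Polynomial.map_pow, map_X, map_C,
      map_natCast, (ZMod.natCast_eq_zero_iff c p).mpr hpc, C_0, sub_zero, map_cyclotomic] at this
  have hlift : (cyclotomic n ℤ).map (Int.castRingHom (ZMod p)) ∣ Q.map (Int.castRingHom _) := by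
    rw [map_cyclotomic]
    exact FiniteField.cyclotomic_dvd_of_dvd_mul_comp (by rwa [ZMod.card]) hmod
  obtain ⟨H, Q₁, hQH⟩ := exists_eq_mul_add_C_mul_of_map_dvd_s17 hlift
  -- as `Φ_n ∣ Φ_n(X^(n-1))`, modulo `Φ_n` we have `Q ≡ p Q₁` and `Q(X^(n-1)) ≡ p Q₁(X^(n-1))`
  have hcross : cyclotomic n ℤ ∣ cyclotomic n ℤ * (H * Q.comp (X ^ (n - 1))) +
      (cyclotomic n ℤ).comp (X ^ (n - 1)) * (C (p : ℤ) * Q₁ * H.comp (X ^ (n - 1))) :=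
    dvd_add (dvd_mul_right _ _) ((cyclotomic_dvd_comp_X_pow_pred n).mul_right _)
  refine ⟨Q₁, (dvd_add_left hcross).mp ?_⟩
  convert hQ using 1
  rw [hQH]
  simp only [add_comp, mul_comp, C_comp, C_pow]
  ring

theorem exists_eq_sq_mul (hc : IsCyclotomicNorm n c) (hp : p.Prime) (hpn : ¬p ∣ n)
    (hn : n ∣ p ^ j + 1) (hpc : p ∣ c) : ∃ c', c = p ^ 2 * c' ∧ IsCyclotomicNorm n c' := by
  obtain ⟨Q₁, hQ₁⟩ := hc.exists_cyclotomic_dvd_C_sq_mul_sub_C hp hpn hn hpc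
  have hdeg : 0 < (cyclotomic n ℤ).natDegree := by
    rw [natDegree_cyclotomic]
    exact Nat.totient_pos.mpr (Nat.pos_of_dvd_of_pos hn (Nat.succ_pos _))
  obtain ⟨c', rfl⟩ : p ^ 2 ∣ c :=
    (cyclotomic.monic n ℤ).natCast_dvd_of_dvd_C_mul_sub_C hdeg (by exact_mod_cast hQ₁)
  refine ⟨c', rfl, Q₁, (cyclotomic.monic n ℤ).dvd_of_dvd_C_mul (a := (p : ℤ) ^ 2)
    (pow_ne_zero 2 (Int.natCast_ne_zero.mpr hp.ne_zero)) ?_⟩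
  convert hQ₁ using 1
  push_cast
  rw [mul_sub, C_mul]

theorem even_factorization (hc : IsCyclotomicNorm n c) (hp : p.Prime) (hpn : ¬p ∣ n)
    (hn : n ∣ p ^ j + 1) : Even (c.factorization p) := by
  induction c using Nat.strong_induction_on with
  | _ c ih =>
  by_cases hpc : p ∣ c
  · obtain ⟨c', rfl, hc'⟩ := hc.exists_eq_sq_mul hp hpn hn hpc
    rcases eq_or_ne c' 0 with rfl | hc'0
    · simp
    rw [Nat.factorization_mul (pow_ne_zero 2 hp.ne_zero) hc'0, Finsupp.add_apply,
      hp.factorization_pow, Finsupp.single_eq_same]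
    have hlt : c' < p ^ 2 * c' :=
      lt_mul_left (Nat.pos_of_ne_zero hc'0) (Nat.one_lt_pow two_ne_zero hp.one_lt)
    exact even_two.add (ih c' hlt hc')
  · simp [Nat.factorization_eq_zero_of_not_dvd hpc]

end IsCyclotomicNorm

theorem norm_cyclotomic_qr_condition_general (q : ℕ) (hq : q.Prime)
    (P : Polynomial ℚ) (m : ℕ)
    (hm : (‖Polynomial.aeval (Complex.exp (2 * Real.pi * Complex.I / q)) P‖) ^ 2
      = (m : ℝ)) :
    ∀ p : ℕ, p.Prime → p ≠ q → ¬ Even (m.factorization p) →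
      IsSquare ((p : ZMod q)) := by
  intro p hp hpq hodd
  by_contra hns
  have := Fact.mk hq
  have hm0 : m ≠ 0 := by rintro rfl; simp at hodd
  have hqp : q ∣ p ^ (q / 2) + 1 := by
    rw [← ZMod.natCast_eq_zero_iff, Nat.cast_add, Nat.cast_pow,
      ZMod.pow_div_two_eq_neg_one_of_not_isSquare hns, Nat.cast_one, neg_add_cancel]
  have hpq' : ¬p ∣ q := fun h => hpq ((Nat.prime_dvd_prime_iff_eq hp hq).mp h)
  obtain ⟨e, he, hnorm⟩ := exists_isCyclotomicNorm_sq_mul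
    ((Complex.isPrimitiveRoot_exp q hq.ne_zero).cyclotomic_dvd_mul_comp_sub_C_of_norm_sq hq.ne_zero
      (m := m) (by exact_mod_cast hm))
  have heven := hnorm.even_factorization hp hpq' hqp
  rw [Nat.factorization_mul (pow_ne_zero 2 he) hm0, Finsupp.add_apply, Nat.factorization_pow,
    Finsupp.smul_apply, smul_eq_mul, Nat.even_add] at heven
  exact hodd (heven.mp (even_two_mul _))

theorem norm_cyclotomic_qr_condition (q : ℕ) (hq : q.Prime) (hq3 : q % 4 = 3)
    (P : Polynomial ℚ) (m : ℕ)
    (hm : (‖Polynomial.aeval (Complex.exp (2 * Real.pi * Complex.I / q)) P‖) ^ 2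
      = (m : ℝ)) :
    ∀ p : ℕ, p.Prime → p ≠ q → ¬ Even (m.factorization p) →
      IsSquare ((p : ZMod q)) :=
  norm_cyclotomic_qr_condition_general q hq P m hm
end
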